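/- For every μ with 1/2 < μ ≤ 1, one has sup_{x ∈ [0,1]} |h_μ(x) − x| ≤ 1 − μ. Consequently, the one-parameter family {h_μ} converges uniformly to the identity function on [0,1] as μ → 1. -/

import Mathlib

/-!
The identity satisfies the commuter equation up to an error of at most `(1 - μ)/2`:
for `x ≤ 1/2`, `x - (1/2)·(2μx) = (1 - μ)x`, and symmetrically on `(1/2, 1]`. Hence the deviation
`e = h - id` obeys `|e x| ≤ |e (T_μ x)|/2 + (1 - μ)/2`, and its supremum `M`, finite because `h`
maps `[0,1]` into itself, satisfies `M ≤ M/2 + (1 - μ)/2`, i.e. `M ≤ 1 - μ`.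
-/

open Set

/-- `h : [0,1] → [0,1]` satisfies the commuter functional equation for `T_μ`:
`h(x) = (1/2)·h(2μx)` for `0 ≤ x ≤ 1/2` and `h(x) = 1 - (1/2)·h(2μ(1-x))` for `1/2 < x ≤ 1`. -/
def IsCommuter (μ : ℝ) (h : ℝ → ℝ) : Prop :=
  (∀ x ∈ Icc (0:ℝ) 1, h x ∈ Icc (0:ℝ) 1) ∧
  (∀ x : ℝ, 0 ≤ x → x ≤ 1/2 → h x = (1/2) * h (2*μ*x)) ∧
  (∀ x : ℝ, 1/2 < x → x ≤ 1 → h x = 1 - (1/2) * h (2*μ*(1-x)))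

theorem one_sub_mul_le_of_forall_exists_le_mul_add {α : Type*} {f : α → ℝ}
    (hf : BddAbove (range f)) {r c : ℝ} (hr₀ : 0 ≤ r) (hr₁ : r ≤ 1)
    (hstep : ∀ x, ∃ y, f x ≤ r * f y + c) (x : α) : (1 - r) * f x ≤ c := by
  have : Nonempty α := ⟨x⟩
  have hsup : iSup f ≤ r * iSup f + c := ciSup_le fun y => by
    obtain ⟨z, hz⟩ := hstep y
    have := mul_le_mul_of_nonneg_left (le_ciSup hf z) hr₀
    linarith
  have hx := mul_le_mul_of_nonneg_left (le_ciSup hf x) (sub_nonneg.2 hr₁)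
  linarith

namespace IsCommuter

variable {μ : ℝ} {h : ℝ → ℝ}

theorem abs_sub_le_half_add (hc : IsCommuter μ h) (hμ₀ : 0 ≤ μ) (hμ₁ : μ ≤ 1)
    {x : ℝ} (hx : x ∈ Icc (0:ℝ) 1) :
    ∃ y ∈ Icc (0:ℝ) 1, |h x - x| ≤ |h y - y| / 2 + (1 - μ) / 2 := by
  obtain ⟨-, hleft, hright⟩ := hc
  obtain ⟨hx₀, hx₁⟩ := hx
  rcases le_or_gt x (1/2) with hx_le | hx_gt
  · refine ⟨2*μ*x, ⟨by positivity, by nlinarith⟩, ?_⟩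
    have hdev : h x - x = (h (2*μ*x) - 2*μ*x) / 2 - (1 - μ) * x := by
      rw [hleft x hx₀ hx_le]; ring
    have herr : 0 ≤ (1 - μ) * x ∧ (1 - μ) * x ≤ (1 - μ) / 2 :=
      ⟨by nlinarith, by nlinarith⟩
    rw [hdev]
    refine (abs_sub _ _).trans ?_
    rw [abs_div, abs_two, abs_of_nonneg herr.1]
    linarith
  · refine ⟨2*μ*(1-x), ⟨by nlinarith, by nlinarith⟩, ?_⟩
    have hdev : h x - x = (1 - μ) * (1 - x) - (h (2*μ*(1-x)) - 2*μ*(1-x)) / 2 := by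
      rw [hright x hx_gt hx₁]; ring
    have herr : 0 ≤ (1 - μ) * (1 - x) ∧ (1 - μ) * (1 - x) ≤ (1 - μ) / 2 :=
      ⟨by nlinarith, by nlinarith⟩
    rw [hdev]
    refine (abs_sub _ _).trans ?_
    rw [abs_div, abs_two, abs_of_nonneg herr.1]
    linarith

theorem abs_sub_le (hc : IsCommuter μ h) (hμ₀ : 0 ≤ μ) (hμ₁ : μ ≤ 1)
    {x : ℝ} (hx : x ∈ Icc (0:ℝ) 1) : |h x - x| ≤ 1 - μ := by
  have hbdd : BddAbove (range fun y : Icc (0:ℝ) 1 => |h y - y|) :=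
    ⟨1, forall_mem_range.2 fun y => Real.dist_le_of_mem_Icc_01 (hc.1 y y.2) y.2⟩
  have hstep (y : Icc (0:ℝ) 1) : ∃ z : Icc (0:ℝ) 1, |h y - y| ≤ 1/2 * |h z - z| + (1 - μ) / 2 := by
    obtain ⟨z, hz, hle⟩ := hc.abs_sub_le_half_add hμ₀ hμ₁ y.2
    exact ⟨⟨z, hz⟩, by linarith⟩
  have := one_sub_mul_le_of_forall_exists_le_mul_add hbdd (by norm_num) (by norm_num) hstep ⟨x, hx⟩
  linarith

end IsCommuter

/-- For `1/2 < μ ≤ 1`, `sup_{x ∈ [0,1]} |h_μ(x) - x| ≤ 1 - μ`; consequently the family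
`{h_μ}` converges uniformly to the identity on `[0,1]` as `μ → 1`. -/
theorem commuter_tendsto_id :
    (∀ μ : ℝ, 1/2 < μ → μ ≤ 1 → ∀ h : ℝ → ℝ, IsCommuter μ h →
      (⨆ x : Icc (0:ℝ) 1, |h (x:ℝ) - (x:ℝ)|) ≤ 1 - μ) ∧
    (∀ ε : ℝ, 0 < ε → ∃ δ : ℝ, 0 < δ ∧
      ∀ μ : ℝ, 1/2 < μ → μ ≤ 1 → |μ - 1| < δ →
        ∀ h : ℝ → ℝ, IsCommuter μ h → ∀ x ∈ Icc (0:ℝ) 1, |h x - x| < ε) := by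
  refine ⟨fun μ hμ₀ hμ₁ h hc => ?_, fun ε hε => ⟨ε, hε, fun μ hμ₀ hμ₁ hδ h hc x hx => ?_⟩⟩
  · have : Nonempty (Icc (0:ℝ) 1) := ⟨⟨0, left_mem_Icc.2 zero_le_one⟩⟩
    exact ciSup_le fun x => hc.abs_sub_le (by linarith) hμ₁ x.2
  · linarith [hc.abs_sub_le (by linarith) hμ₁ hx, neg_le_abs (μ - 1)]
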